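/- arXiv:2203.11927 — 2 statements merged into one kernel-verified Lean document; each statement's English description precedes it below -/
import Mathlib

section
/- (Theorem 1.6) Suppose σ_1, …, σ_r satisfy property I with witnesses α_1, …, α_r. Then in ℤ[t,t⁻¹]: χ_c(S)(t) = t^n · Σ_{I⊆{1,…,r}} (−1)^{|I|} t^{−|α_I|} (the term I = ∅ contributing 1); that is, χ_c(S)(t) = t^n K(t^{−1}), where K(x) = Σ_{I⊆{1,…,r}} (−1)^{|I|} x^{|α_I|} is the numerator of the Hilbert–Poincaré series of the Stanley–Reisner ring of the auxiliary complex with minimal nonfaces α_1, …, α_r. -/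
/-!
For nonempty `I`, Property I gives `|σ_I| = |α_I| + c(I)`, which turns each exponent
`n - |σ_I| + c(I)` of `χ_c(S)` into `n - |α_I|`. The identity is proved by adding one index `p`
at a time. If `σ_p` misses `σ_I`, then `p` forms a new component of `G_I` and `α_p` misses `α_I`.
Otherwise `p` joins exactly one component: were `σ_p` to meet two blocks `C`, `D` with disjoint
`σ`-unions (hence, by Property I, disjoint `α`-unions), Property I for `C`, `D` and `C ∪ D`
against `p` would give `|σ_{C∪D} ∩ σ_p| - 1 = (|σ_C ∩ σ_p| - 1) + (|σ_D ∩ σ_p| - 1)`, although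
the left-hand intersection is the disjoint union of the two on the right. So `c(I)` is unchanged, and
`|α_I ∩ α_p| = |σ_I ∩ σ_p| - 1` balances inclusion–exclusion for the two unions.
-/

open Finset LaurentPolynomial

noncomputable section

/-- The union `σ_I = ⋃_{i ∈ I} σ_i`. -/
def unionOver {ι V : Type*} [DecidableEq V] (σ : ι → Finset V) (I : Finset ι) : Finset V :=
  I.sup σ

/-- The intersection graph `G_I` on the vertex set `I`. -/
def interGraph {ι V : Type*} [DecidableEq V] (σ : ι → Finset V) (I : Finset ι) :
    SimpleGraph {i // i ∈ I} where
  Adj i j := i ≠ j ∧ (σ i.1 ∩ σ j.1).Nonempty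
  symm := by
    constructor
    intro i j h
    exact ⟨h.1.symm, by rw [Finset.inter_comm]; exact h.2⟩
  loopless := by constructor; intro i h; exact h.1 rfl

/-- `c(I)`, the number of connected components of `G_I`. -/
def compCount {ι V : Type*} [DecidableEq V] (σ : ι → Finset V) (I : Finset ι) : ℕ :=
  Nat.card (interGraph σ I).ConnectedComponent

/-- Property I. -/
def PropertyI {ι V W : Type*} [DecidableEq V] [DecidableEq W]
    (σ : ι → Finset V) (α : ι → Finset W) : Prop :=
  (∀ i, (α i).card + 1 = (σ i).card) ∧
  ∀ I : Finset ι, I.Nonempty → ∀ p ∉ I,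
    (unionOver σ I ∩ σ p = ∅ → unionOver α I ∩ α p = ∅) ∧
    ((unionOver σ I ∩ σ p).Nonempty →
      (unionOver α I ∩ α p).card + 1 = (unionOver σ I ∩ σ p).card)

/-- The simplicial chromatic polynomial. -/
def simpChrom {ι : Type*} [Fintype ι] [DecidableEq ι] {n : ℕ} (σ : ι → Finset (Fin n)) :
    LaurentPolynomial ℤ :=
  T (n : ℤ) +
  ∑ I ∈ (univ : Finset ι).powerset.filter (fun I => I.Nonempty),
    (-1) ^ I.card *
      T ((n : ℤ) - ((unionOver σ I).card : ℤ) + (compCount σ I : ℤ))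

/-- Faces of the complex whose minimal nonfaces are the `α i`. -/
def facesOf {ι : Type*} [Fintype ι] {N : ℕ} (α : ι → Finset (Fin N)) :
    Finset (Finset (Fin N)) :=
  (univ : Finset (Finset (Fin N))).filter (fun F => ∀ i, ¬ α i ⊆ F)

/-- Coefficient of `t^k` in a Laurent polynomial. -/
def lcoeff (p : LaurentPolynomial ℤ) (k : ℤ) : ℤ := p.coeff k

end

open SimpleGraph

section unionOver

variable {ι V : Type*} [DecidableEq V] (σ : ι → Finset V)

@[simp]
lemma unionOver_empty : unionOver σ ∅ = ∅ := sup_empty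

@[simp]
lemma unionOver_singleton (i : ι) : unionOver σ {i} = σ i := sup_singleton

lemma unionOver_insert [DecidableEq ι] (p : ι) (s : Finset ι) :
    unionOver σ (insert p s) = σ p ∪ unionOver σ s := sup_insert

lemma unionOver_union [DecidableEq ι] (s t : Finset ι) :
    unionOver σ (s ∪ t) = unionOver σ s ∪ unionOver σ t := sup_union

variable {σ}

lemma disjoint_unionOver_left {s : Finset ι} {t : Finset V} :
    Disjoint (unionOver σ s) t ↔ ∀ i ∈ s, Disjoint (σ i) t := Finset.disjoint_sup_left

lemma disjoint_unionOver_right {s : Finset ι} {t : Finset V} :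
    Disjoint t (unionOver σ s) ↔ ∀ i ∈ s, Disjoint t (σ i) := Finset.disjoint_sup_right

lemma card_unionOver_union_inter [DecidableEq ι] {s t : Finset ι}
    (h : Disjoint (unionOver σ s) (unionOver σ t)) (u : Finset V) :
    #(unionOver σ (s ∪ t) ∩ u) = #(unionOver σ s ∩ u) + #(unionOver σ t ∩ u) := by
  rw [unionOver_union, union_inter_distrib_right,
    card_union_of_disjoint (h.mono inter_subset_left inter_subset_left)]

end unionOver

namespace PropertyI

variable {ι V W : Type*} [DecidableEq V] [DecidableEq W] {σ : ι → Finset V} {α : ι → Finset W}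

lemma disjoint (h : PropertyI σ α) {I : Finset ι} (hI : I.Nonempty) {p : ι} (hp : p ∉ I)
    (hσ : Disjoint (unionOver σ I) (σ p)) : Disjoint (unionOver α I) (α p) :=
  disjoint_iff_inter_eq_empty.2 ((h.2 I hI p hp).1 (disjoint_iff_inter_eq_empty.1 hσ))

lemma card_inter_add_one (h : PropertyI σ α) {I : Finset ι} (hI : I.Nonempty) {p : ι}
    (hp : p ∉ I) (hσ : ¬Disjoint (unionOver σ I) (σ p)) :
    #(unionOver α I ∩ α p) + 1 = #(unionOver σ I ∩ σ p) :=
  (h.2 I hI p hp).2 (not_disjoint_iff_nonempty_inter.1 hσ)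

lemma disjoint_unionOver (h : PropertyI σ α) {C D : Finset ι} (hC : C.Nonempty)
    (hCD : Disjoint C D) (hσ : Disjoint (unionOver σ C) (unionOver σ D)) :
    Disjoint (unionOver α C) (unionOver α D) := by
  rw [disjoint_unionOver_right] at hσ ⊢
  exact fun b hb => h.disjoint hC (disjoint_right.1 hCD hb) (hσ b hb)

lemma disjoint_or_disjoint [DecidableEq ι] (h : PropertyI σ α) {C D : Finset ι}
    (hC : C.Nonempty) (hD : D.Nonempty) (hCD : Disjoint C D)
    (hσ : Disjoint (unionOver σ C) (unionOver σ D)) {p : ι} (hpC : p ∉ C) (hpD : p ∉ D) :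
    Disjoint (unionOver σ C) (σ p) ∨ Disjoint (unionOver σ D) (σ p) := by
  by_contra! ⟨hCp, hDp⟩
  have hCDp : ¬Disjoint (unionOver σ (C ∪ D)) (σ p) := by
    rw [unionOver_union, disjoint_union_left]
    exact fun hd => hCp hd.1
  have hp : p ∉ C ∪ D := by simp [hpC, hpD]
  have := card_unionOver_union_inter hσ (σ p)
  have := card_unionOver_union_inter (h.disjoint_unionOver hC hCD hσ) (α p)
  have := h.card_inter_add_one hC hpC hCp
  have := h.card_inter_add_one hD hpD hDp
  have := h.card_inter_add_one (hC.mono subset_union_left) hp hCDp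
  omega

end PropertyI

lemma SimpleGraph.Reachable.apply_eq_of_forall_adj {V β : Type*} {G : SimpleGraph V} {f : V → β}
    (hf : ∀ u v, G.Adj u v → f u = f v) {u v : V} (h : G.Reachable u v) : f u = f v := by
  obtain ⟨w⟩ := h
  induction w with
  | nil => rfl
  | cons huv _ ih => exact (hf _ _ huv).trans ih

namespace interGraph

variable {ι V : Type*} [DecidableEq V] (σ : ι → Finset V)

lemma adj_iff {s : Finset ι} {i j : s} :
    (interGraph σ s).Adj i j ↔ i ≠ j ∧ ¬Disjoint (σ i) (σ j) := by
  rw [not_disjoint_iff_nonempty_inter]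
  rfl

def ofSubset {s t : Finset ι} (h : s ⊆ t) : interGraph σ s →g interGraph σ t where
  toFun i := ⟨i, h i.2⟩
  map_rel' := fun ⟨hne, hint⟩ => ⟨fun e => hne (Subtype.ext (Subtype.mk_eq_mk.1 e)), hint⟩

variable [DecidableEq ι] {σ} {s : Finset ι} {p : ι}

lemma not_disjoint_of_adj_of_notMem {u v : {x // x ∈ insert p s}}
    (huv : (interGraph σ (insert p s)).Adj u v) (hv : v.1 ∉ s) : ¬Disjoint (σ u) (σ p) := by
  have hvp : σ v = σ p := congrArg σ ((mem_insert.1 v.2).resolve_right hv)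
  exact hvp ▸ ((adj_iff σ).1 huv).2

/-- The invariant carried along walks of `G_{insert p s}` is the set of components of `G_s`
that a vertex touches. -/
lemma map_ofSubset_insert_injective
    (hnbr : ∀ i j : s, ¬Disjoint (σ i) (σ p) → ¬Disjoint (σ j) (σ p) →
      (interGraph σ s).Reachable i j) :
    Function.Injective (ConnectedComponent.map (ofSubset σ (subset_insert p s))) := by
  let G := interGraph σ s
  let f : {x // x ∈ insert p s} → Set G.ConnectedComponent := fun v =>
    if hv : v.1 ∈ s then {G.connectedComponentMk ⟨v, hv⟩}
    else G.connectedComponentMk '' {y | ¬Disjoint (σ y) (σ p)}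
  have hf_mem (a : s) : f (ofSubset σ (subset_insert p s) a) = {G.connectedComponentMk a} :=
    dif_pos a.2
  have hf_edge (u v : {x // x ∈ insert p s}) (huv : (interGraph σ (insert p s)).Adj u v)
      (hu : u.1 ∈ s) : f u = f v := by
    by_cases hv : v.1 ∈ s
    · simp only [f, dif_pos hu, dif_pos hv]
      have huv' : G.Adj ⟨u, hu⟩ ⟨v, hv⟩ :=
        ⟨fun e => huv.ne (Subtype.ext (Subtype.mk_eq_mk.1 e)), huv.2⟩
      exact congrArg _ (ConnectedComponent.sound huv'.reachable)
    · have hup := not_disjoint_of_adj_of_notMem huv hv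
      simp only [f, dif_pos hu, dif_neg hv]
      ext c
      constructor
      · rintro rfl
        exact ⟨⟨u, hu⟩, hup, rfl⟩
      · rintro ⟨y, hy, rfl⟩
        exact ConnectedComponent.sound (hnbr y ⟨u, hu⟩ hy hup)
  have hf_adj (u v : {x // x ∈ insert p s}) (huv : (interGraph σ (insert p s)).Adj u v) :
      f u = f v := by
    by_cases hu : u.1 ∈ s
    · exact hf_edge u v huv hu
    by_cases hv : v.1 ∈ s
    · exact (hf_edge v u huv.symm hv).symm
    simp only [f, dif_neg hu, dif_neg hv]
  refine ConnectedComponent.ind₂ fun a b hab => ?_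
  rw [ConnectedComponent.map_mk, ConnectedComponent.map_mk, ConnectedComponent.eq] at hab
  have := hab.apply_eq_of_forall_adj hf_adj
  rw [hf_mem, hf_mem, Set.singleton_eq_singleton_iff] at this
  exact this

lemma exists_map_ofSubset_insert (c : (interGraph σ (insert p s)).ConnectedComponent) :
    c = (interGraph σ (insert p s)).connectedComponentMk ⟨p, mem_insert_self p s⟩ ∨
      ∃ d, ConnectedComponent.map (ofSubset σ (subset_insert p s)) d = c := by
  induction c using ConnectedComponent.ind with | h v =>
  by_cases hv : v.1 ∈ s
  · exact .inr ⟨(interGraph σ s).connectedComponentMk ⟨v, hv⟩, rfl⟩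
  · obtain rfl : v = ⟨p, mem_insert_self p s⟩ := Subtype.ext ((mem_insert.1 v.2).resolve_right hv)
    exact .inl rfl

end interGraph

section compCount

variable {ι V : Type*} [DecidableEq V] (σ : ι → Finset V)

lemma compCount_singleton (i : ι) : compCount σ {i} = 1 := Nat.card_unique

variable [DecidableEq ι]

open interGraph

lemma compCount_insert_of_disjoint {s : Finset ι} {p : ι} (hp : p ∉ s)
    (hd : Disjoint (unionOver σ s) (σ p)) : compCount σ (insert p s) = compCount σ s + 1 := by
  have hnbr (i : s) : Disjoint (σ i) (σ p) := disjoint_unionOver_left.1 hd i i.2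
  set G := interGraph σ (insert p s)
  set Φ := ConnectedComponent.map (ofSubset σ (subset_insert p s))
  set p' : {x // x ∈ insert p s} := ⟨p, mem_insert_self p s⟩
  have hΦ : Function.Injective Φ :=
    map_ofSubset_insert_injective fun i _ hi => absurd (hnbr i) hi
  have hp_isolated (d) : G.connectedComponentMk p' ≠ Φ d := by
    induction d using ConnectedComponent.ind with | h a =>
    intro hpa
    have hs (u v) (huv : G.Adj u v) : (u.1 ∈ s) = (v.1 ∈ s) := propext
      ⟨fun hu => by_contra fun hv => not_disjoint_of_adj_of_notMem huv hv (hnbr ⟨u, hu⟩),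
        fun hv => by_contra fun hu => not_disjoint_of_adj_of_notMem huv.symm hu (hnbr ⟨v, hv⟩)⟩
    have hpa_s := (ConnectedComponent.exact hpa).apply_eq_of_forall_adj hs
    exact hp (hpa_s ▸ a.2)
  let e (o : Option (interGraph σ s).ConnectedComponent) : G.ConnectedComponent :=
    o.elim (G.connectedComponentMk p') Φ
  have he : Function.Bijective e := by
    refine ⟨?_, fun c => ?_⟩
    · rintro (_ | c) (_ | d) hcd
      exacts [rfl, absurd hcd (hp_isolated d), absurd hcd.symm (hp_isolated c),
        congrArg some (hΦ hcd)]
    · obtain rfl | ⟨d, rfl⟩ := exists_map_ofSubset_insert c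
      exacts [⟨none, rfl⟩, ⟨some d, rfl⟩]
  rw [compCount, compCount, ← Finite.card_option, Nat.card_eq_of_bijective e he]

lemma compCount_insert_of_reachable {s : Finset ι} {p i₀ : ι} (hp : p ∉ s) (hi₀ : i₀ ∈ s)
    (hi₀p : ¬Disjoint (σ i₀) (σ p))
    (hnbr : ∀ i j : s, ¬Disjoint (σ i) (σ p) → ¬Disjoint (σ j) (σ p) →
      (interGraph σ s).Reachable i j) :
    compCount σ (insert p s) = compCount σ s := by
  refine (Nat.card_eq_of_bijective _ ⟨map_ofSubset_insert_injective hnbr, fun c => ?_⟩).symm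
  obtain rfl | hc := exists_map_ofSubset_insert c
  · refine ⟨(interGraph σ s).connectedComponentMk ⟨i₀, hi₀⟩, ConnectedComponent.sound ?_⟩
    exact Adj.reachable ((adj_iff σ).2 ⟨fun e => hp (Subtype.mk_eq_mk.1 e ▸ hi₀), hi₀p⟩)
  · exact hc

end compCount

namespace PropertyI

variable {ι V W : Type*} [DecidableEq ι] [DecidableEq V] [DecidableEq W]
  {σ : ι → Finset V} {α : ι → Finset W}

/-- Otherwise the component of `i` and the rest of `s` would be two blocks with disjoint
`σ`-unions both meeting `σ p`. -/
lemma reachable_of_not_disjoint (h : PropertyI σ α) {s : Finset ι} {p : ι} (hp : p ∉ s)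
    {i j : s} (hi : ¬Disjoint (σ i) (σ p)) (hj : ¬Disjoint (σ j) (σ p)) :
    (interGraph σ s).Reachable i j := by
  classical
  by_contra hij
  set G := interGraph σ s
  let C := s.filter fun a => ∃ ha : a ∈ s, G.Reachable i ⟨a, ha⟩
  have mem_C (a : s) : a.1 ∈ C ↔ G.Reachable i a := by simp [C]
  have hsep : Disjoint (unionOver σ C) (unionOver σ (s \ C)) := by
    refine disjoint_unionOver_left.2 fun a ha => disjoint_unionOver_right.2 fun b hb => ?_
    by_contra hab
    obtain ⟨hbs, hbC⟩ := mem_sdiff.1 hb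
    have hia := (mem_C ⟨a, filter_subset _ _ ha⟩).1 ha
    have hab' : G.Adj ⟨a, filter_subset _ _ ha⟩ ⟨b, hbs⟩ :=
      (interGraph.adj_iff σ).2 ⟨fun e => hbC (Subtype.mk_eq_mk.1 e ▸ ha), hab⟩
    exact hbC ((mem_C ⟨b, hbs⟩).2 (hia.trans hab'.reachable))
  have hiC : i.1 ∈ C := (mem_C i).2 .rfl
  have hjC : j.1 ∈ s \ C := mem_sdiff.2 ⟨j.2, fun hjC => hij ((mem_C j).1 hjC)⟩
  rcases h.disjoint_or_disjoint ⟨i, hiC⟩ ⟨j, hjC⟩ disjoint_sdiff hsep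
    (fun hpC => hp (filter_subset _ _ hpC)) (fun hpD => hp (sdiff_subset hpD)) with hd | hd
  · exact hi (disjoint_unionOver_left.1 hd i hiC)
  · exact hj (disjoint_unionOver_left.1 hd j hjC)

theorem card_unionOver_add_compCount (h : PropertyI σ α) {I : Finset ι} (hI : I.Nonempty) :
    #(unionOver α I) + compCount σ I = #(unionOver σ I) := by
  induction hI using Nonempty.cons_induction with
  | singleton i => simpa [compCount_singleton] using h.1 i
  | cons p s hp hs ih =>
    rw [cons_eq_insert, unionOver_insert, unionOver_insert]
    have hαp := h.1 p
    by_cases hd : Disjoint (unionOver σ s) (σ p)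
    · rw [compCount_insert_of_disjoint σ hp hd, card_union_of_disjoint hd.symm,
        card_union_of_disjoint (h.disjoint hs hp hd).symm]
      omega
    · obtain ⟨i, hi, hip⟩ : ∃ i ∈ s, ¬Disjoint (σ i) (σ p) := by
        simpa [disjoint_unionOver_left] using hd
      rw [compCount_insert_of_reachable σ hp hi hip fun i j => h.reachable_of_not_disjoint hp]
      have := card_union_add_card_inter (σ p) (unionOver σ s)
      have := card_union_add_card_inter (α p) (unionOver α s)
      have := h.card_inter_add_one hs hp hd
      rw [inter_comm (σ p), inter_comm (α p)] at *
      omega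

end PropertyI

/-- under property I,
`χ_c(S)(t) = t^n · Σ_{I ⊆ [r]} (−1)^{|I|} t^{−|α_I|}` in `ℤ[t,t⁻¹]`. -/
theorem stmt_1 {n r : ℕ} {W : Type*} [DecidableEq W]
    (σ : Fin r → Finset (Fin n)) (α : Fin r → Finset W)
    (h : PropertyI σ α) :
    simpChrom σ =
      T (n : ℤ) *
        ∑ I ∈ (univ : Finset (Fin r)).powerset,
          (-1) ^ I.card * T (-((unionOver α I).card : ℤ)) := by
  have hfilter_nonempty : (univ : Finset (Fin r)).powerset.filter (fun I => I.Nonempty) =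
      (univ : Finset (Fin r)).powerset.erase ∅ := by
    ext I
    simp [nonempty_iff_ne_empty, and_comm]
  rw [simpChrom, hfilter_nonempty, ← add_sum_erase _ _ (empty_mem_powerset _), mul_add, mul_sum]
  simp only [card_empty, pow_zero, unionOver_empty, Nat.cast_zero, neg_zero, T_zero, mul_one]
  refine congrArg _ (sum_congr rfl fun I hI => ?_)
  have := h.card_unionOver_add_compCount (nonempty_iff_ne_empty.2 (ne_of_mem_erase hI))
  rw [mul_left_comm, ← T_add]
  congr 2
  omega
end

section
/- (Proposition on the constant-component case) Suppose there is a ≥ 1 such that c(I) = a for every nonempty I ⊆ {1,…,r}. Then in ℤ[t,t⁻¹]: χ_c(S)(t) − t^n = t^{n+a} (K(t^{−1}) − 1), where K(x) = Σ_{I⊆{1,…,r}} (−1)^{|I|} x^{|σ_I|} is the numerator of the Hilbert–Poincaré series of the Stanley–Reisner ring of S itself. -/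
open Finset LaurentPolynomial

theorem Finset.sum_powerset_eq_add_sum_nonempty {ι M : Type*} [AddCommMonoid M]
    (s : Finset ι) (f : Finset ι → M) :
    ∑ I ∈ s.powerset, f I = f ∅ + ∑ I ∈ s.powerset.filter (·.Nonempty), f I := by
  have h_empty : s.powerset.filter (¬ ·.Nonempty) = {∅} := by
    ext I
    simp +contextual [not_nonempty_iff_eq_empty]
  rw [← sum_filter_not_add_sum_filter _ (·.Nonempty), h_empty, sum_singleton]

@[simp]
theorem unionOver_empty_s5 {ι V : Type*} [DecidableEq V] (σ : ι → Finset V) :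
    unionOver σ ∅ = ∅ :=
  sup_empty

theorem stmt_5_general {n r : ℕ} (σ : Fin r → Finset (Fin n)) (a : ℕ)
    (hc : ∀ I : Finset (Fin r), I.Nonempty → compCount σ I = a) :
    simpChrom σ - T (n : ℤ) =
      T ((n : ℤ) + a) *
        ((∑ I ∈ (univ : Finset (Fin r)).powerset,
            (-1) ^ I.card * T (-((unionOver σ I).card : ℤ))) - 1) := by
  rw [sum_powerset_eq_add_sum_nonempty, simpChrom, add_sub_cancel_left]
  simp only [unionOver_empty_s5, card_empty, pow_zero, Nat.cast_zero, neg_zero, T_zero, mul_one,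
    add_sub_cancel_left, mul_sum]
  refine sum_congr rfl fun I hI => ?_
  rw [hc I (mem_filter.mp hI).2, mul_left_comm, ← T_add]
  congr 2
  ring

/-- if `c(I) = a ≥ 1` for every nonempty `I`, then
`χ_c(S)(t) − t^n = t^{n+a} (K(t^{−1}) − 1)` where
`K(x) = Σ_{I⊆[r]} (−1)^{|I|} x^{|σ_I|}`. -/
theorem stmt_5 {n r : ℕ} (σ : Fin r → Finset (Fin n)) (a : ℕ) (ha : 1 ≤ a)
    (hc : ∀ I : Finset (Fin r), I.Nonempty → compCount σ I = a) :
    simpChrom σ - T (n : ℤ) =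
      T ((n : ℤ) + a) *
        ((∑ I ∈ (univ : Finset (Fin r)).powerset,
            (-1) ^ I.card * T (-((unionOver σ I).card : ℤ))) - 1) :=
  stmt_5_general σ a hc
end
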